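/- arXiv:1308.2802 — 2 statements merged into one kernel-verified Lean document; each statement's English description precedes it below -/
import Mathlib

section
/- Let S be a Levi monoid. Define ν : S → ℕ by ν(a) = |[aS, S]| − 1, where [aS, S] is the (finite) set of principal right ideals cS with aS ⊆ cS ⊆ S. Then ν is a length function on S satisfying ν(a) = 1 if and only if a is an atom (i.e. ν is normalized), and ν is the unique normalized length function on S: any length function λ on S with λ(a) = 1 for every atom a equals ν. -/
/-- A length function on a monoid: a homomorphism to (ℕ, +) whose zero set is
exactly the set of units. -/
def IsLengthFunction {S : Type*} [Monoid S] (l : S → ℕ) : Prop :=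
  (∀ a b : S, l (a * b) = l a + l b) ∧ ∀ a : S, l a = 0 ↔ IsUnit a

/-- An equidivisible monoid. -/
def Equidivisible (S : Type*) [Monoid S] : Prop :=
  ∀ a b c d : S, a * b = c * d →
    (∃ u : S, a = c * u ∧ d = u * b) ∨ ∃ v : S, c = a * v ∧ b = v * d

/-- A Levi monoid: an equidivisible monoid equipped with a length function and
containing at least one non-unit. -/
def IsLeviMonoid (S : Type*) [Monoid S] : Prop :=
  Equidivisible S ∧ (∃ l : S → ℕ, IsLengthFunction l) ∧ ∃ a : S, ¬IsUnit a

/-- An atom of a monoid: a non-unit that cannot be factored into two non-units. -/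
def IsMonoidAtom {S : Type*} [Monoid S] (a : S) : Prop :=
  ¬IsUnit a ∧ ∀ b c : S, a = b * c → IsUnit b ∨ IsUnit c

/-- The principal right ideal `aS`. -/
def rIdeal {S : Type*} [Monoid S] (a : S) : Set S := Set.range (a * ·)

/-- The interval `[aS, S]` of principal right ideals containing `aS`, and the
function `ν(a) = |[aS,S]| - 1`. -/
noncomputable def nu {S : Type*} [Monoid S] (a : S) : ℕ :=
  {T : Set S | (∃ c : S, T = rIdeal c) ∧ rIdeal a ⊆ T}.ncard - 1

/-!
The ideals in `[aS, S]` are the `cS` with `c` a left divisor of `a`. By equidivisibility two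
left divisors of `a` are comparable, so divisors of equal length generate the same ideal and
`[aS, S]` has at most `λ(a) + 1` elements for any length function `λ`. Equidivisibility also
shows that `[abS, S]` is `[aS, S]` together with the translate `a · [bS, S]`, the two meeting
only in `aS`; counting gives `ν(ab) = ν(a) + ν(b)`. A length function is determined by its
values on atoms, since a non-unit non-atom is a product of two non-units of smaller length.
-/

section

variable {S : Type*} [Monoid S] {l : S → ℕ}

namespace IsLengthFunction

theorem map_mul (hl : IsLengthFunction l) (a b : S) : l (a * b) = l a + l b := hl.1 a b

theorem eq_zero_iff (hl : IsLengthFunction l) (a : S) : l a = 0 ↔ IsUnit a := hl.2 a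

theorem map_one (hl : IsLengthFunction l) : l 1 = 0 := (hl.eq_zero_iff 1).mpr isUnit_one

theorem le_of_dvd (hl : IsLengthFunction l) {a c : S} (h : c ∣ a) : l c ≤ l a := by
  obtain ⟨u, rfl⟩ := h
  simp [hl.map_mul]

theorem isUnit_of_eq_mul (hl : IsLengthFunction l) {a c u : S} (h : a = c * u)
    (hlen : l a = l c) : IsUnit u := by
  rw [h, hl.map_mul] at hlen
  exact (hl.eq_zero_iff u).mp (by omega)

theorem isMonoidAtom_of_eq_one (hl : IsLengthFunction l) {a : S} (ha : l a = 1) :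
    IsMonoidAtom a := by
  refine ⟨fun hu => by simp [(hl.eq_zero_iff a).mpr hu] at ha, fun b c hbc => ?_⟩
  rw [hbc, hl.map_mul] at ha
  by_contra! h
  have := (hl.eq_zero_iff b).not.mpr h.1
  have := (hl.eq_zero_iff c).not.mpr h.2
  omega

end IsLengthFunction

theorem exists_mul_of_not_isMonoidAtom {a : S} (hu : ¬IsUnit a) (ha : ¬IsMonoidAtom a) :
    ∃ b c, a = b * c ∧ ¬IsUnit b ∧ ¬IsUnit c := by
  simpa [IsMonoidAtom, hu] using ha

theorem IsLengthFunction.ext_of_isMonoidAtom {l' : S → ℕ} (hl : IsLengthFunction l)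
    (hl' : IsLengthFunction l') (h : ∀ a, IsMonoidAtom a → l a = l' a) : l = l' := by
  suffices ∀ n, ∀ a, l a = n → l a = l' a from funext fun a => this _ a rfl
  intro n
  induction n using Nat.strong_induction_on with
  | _ n ih =>
    intro a hn
    by_cases hu : IsUnit a
    · rw [(hl.eq_zero_iff a).mpr hu, (hl'.eq_zero_iff a).mpr hu]
    by_cases hat : IsMonoidAtom a
    · exact h a hat
    obtain ⟨b, c, rfl, hb, hc⟩ := exists_mul_of_not_isMonoidAtom hu hat
    have hb0 := (hl.eq_zero_iff b).not.mpr hb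
    have hc0 := (hl.eq_zero_iff c).not.mpr hc
    rw [hl.map_mul] at hn ⊢
    rw [hl'.map_mul, ih (l b) (by omega) b rfl, ih (l c) (by omega) c rfl]

theorem rIdeal_subset_rIdeal_iff {a c : S} : rIdeal a ⊆ rIdeal c ↔ c ∣ a := by
  constructor
  · intro h
    obtain ⟨u, hu⟩ := h ⟨1, mul_one a⟩
    exact ⟨u, hu.symm⟩
  · rintro ⟨u, rfl⟩ x ⟨s, rfl⟩
    exact ⟨u * s, (mul_assoc _ _ _).symm⟩

theorem rIdeal_one : rIdeal (1 : S) = Set.univ :=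
  Set.eq_univ_of_forall fun x => ⟨x, one_mul x⟩

theorem rIdeal_mul_of_isUnit {c u : S} (hu : IsUnit u) : rIdeal (c * u) = rIdeal c := by
  obtain ⟨w, hw⟩ := hu.exists_right_inv
  refine (rIdeal_subset_rIdeal_iff.mpr (dvd_mul_right c u)).antisymm
    (rIdeal_subset_rIdeal_iff.mpr ⟨w, ?_⟩)
  rw [mul_assoc, hw, mul_one]

theorem rIdeal_of_isUnit {u : S} (hu : IsUnit u) : rIdeal u = Set.univ := by
  rw [← one_mul u, rIdeal_mul_of_isUnit hu, rIdeal_one]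

theorem image_mul_rIdeal (a v : S) : (a * ·) '' rIdeal v = rIdeal (a * v) := by
  simp only [rIdeal, ← Set.range_comp, Function.comp_def, mul_assoc]

theorem IsLengthFunction.eq_of_rIdeal_eq (hl : IsLengthFunction l) {a c : S}
    (h : rIdeal a = rIdeal c) : l a = l c :=
  (hl.le_of_dvd (rIdeal_subset_rIdeal_iff.mp h.ge)).antisymm
    (hl.le_of_dvd (rIdeal_subset_rIdeal_iff.mp h.le))

theorem IsLengthFunction.rIdeal_ne_univ (hl : IsLengthFunction l) {a : S} (ha : ¬IsUnit a) :
    rIdeal a ≠ Set.univ := by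
  rw [← rIdeal_one]
  intro h
  exact ha ((hl.eq_zero_iff a).mp (by simpa [hl.map_one] using hl.eq_of_rIdeal_eq h))

theorem Equidivisible.rIdeal_eq_of_dvd (hE : Equidivisible S) (hl : IsLengthFunction l)
    {b v v' : S} (hv : v ∣ b) (hv' : v' ∣ b) (hlen : l v = l v') : rIdeal v = rIdeal v' := by
  obtain ⟨u, rfl⟩ := hv
  obtain ⟨u', hu'⟩ := hv'
  rcases hE v u v' u' hu' with ⟨w, hw, -⟩ | ⟨w, hw, -⟩
  · rw [hw, rIdeal_mul_of_isUnit (hl.isUnit_of_eq_mul hw (hw ▸ hlen))]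
  · rw [hw, rIdeal_mul_of_isUnit (hl.isUnit_of_eq_mul hw (hw ▸ hlen.symm))]

/-- The interval `[aS, S]`, parametrized by the left divisors of `a`. -/
def rIdealsAbove (a : S) : Set (Set S) := rIdeal '' {c | c ∣ a}

theorem nu_eq_ncard_rIdealsAbove_sub_one (a : S) : nu a = (rIdealsAbove a).ncard - 1 := by
  unfold nu rIdealsAbove
  congr 2
  ext T
  simp only [Set.mem_ofPred_eq, Set.mem_image, ← rIdeal_subset_rIdeal_iff]
  constructor
  · rintro ⟨⟨c, rfl⟩, h⟩
    exact ⟨c, h, rfl⟩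
  · rintro ⟨c, h, rfl⟩
    exact ⟨⟨c, rfl⟩, h⟩

theorem rIdeal_mem_rIdealsAbove (a : S) : rIdeal a ∈ rIdealsAbove a :=
  ⟨a, dvd_refl a, rfl⟩

theorem univ_mem_rIdealsAbove (a : S) : Set.univ ∈ rIdealsAbove a :=
  ⟨1, one_dvd a, rIdeal_one⟩

theorem Equidivisible.rIdealsAbove_finite (hE : Equidivisible S) (hl : IsLengthFunction l)
    (a : S) : (rIdealsAbove a).Finite := by
  have hsub : rIdealsAbove a ⊆ ⋃ n ∈ Set.Iic (l a), rIdeal '' {c | c ∣ a ∧ l c = n} := by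
    rintro _ ⟨c, hc, rfl⟩
    exact Set.mem_biUnion (Set.mem_Iic.mpr (hl.le_of_dvd hc)) ⟨c, ⟨hc, rfl⟩, rfl⟩
  refine (Set.finite_Iic (l a)).biUnion (fun n _ => Set.Subsingleton.finite ?_) |>.subset hsub
  rintro _ ⟨c, ⟨hc, rfl⟩, rfl⟩ _ ⟨c', ⟨hc', hlen⟩, rfl⟩
  exact hE.rIdeal_eq_of_dvd hl hc hc' hlen.symm

theorem Equidivisible.rIdealsAbove_mul (hE : Equidivisible S) (a b : S) :
    rIdealsAbove (a * b) = rIdealsAbove a ∪ Set.image (a * ·) '' rIdealsAbove b := by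
  ext T
  simp only [rIdealsAbove, Set.mem_union, Set.mem_image, Set.mem_ofPred_eq, exists_exists_and_eq_and,
    image_mul_rIdeal]
  constructor
  · rintro ⟨c, ⟨u, hu⟩, rfl⟩
    rcases hE a b c u hu with ⟨w, hw, -⟩ | ⟨w, rfl, hw⟩
    · exact Or.inl ⟨c, ⟨w, hw⟩, rfl⟩
    · exact Or.inr ⟨w, ⟨u, hw⟩, rfl⟩
  · rintro (⟨c, hc, rfl⟩ | ⟨w, hw, rfl⟩)
    · exact ⟨c, hc.mul_right b, rfl⟩
    · exact ⟨a * w, mul_dvd_mul_left a hw, rfl⟩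

theorem rIdealsAbove_inter_image_mul (a b : S) :
    rIdealsAbove a ∩ Set.image (a * ·) '' rIdealsAbove b = {rIdeal a} := by
  refine Set.Subset.antisymm ?_ (Set.singleton_subset_iff.mpr
    ⟨rIdeal_mem_rIdealsAbove a, rIdeal 1, ⟨1, one_dvd b, rfl⟩, by rw [image_mul_rIdeal, mul_one]⟩)
  rintro _ ⟨⟨c, hc, rfl⟩, _, ⟨w, -, rfl⟩, hT⟩
  rw [image_mul_rIdeal] at hT
  exact (rIdeal_subset_rIdeal_iff.mpr hc).antisymm'
    (hT ▸ rIdeal_subset_rIdeal_iff.mpr (dvd_mul_right a w))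

theorem Equidivisible.injOn_image_mul (hE : Equidivisible S) (hl : IsLengthFunction l)
    (a b : S) : Set.InjOn (Set.image (a * ·)) (rIdealsAbove b) := by
  rintro _ ⟨v, hv, rfl⟩ _ ⟨v', hv', rfl⟩ h
  rw [image_mul_rIdeal, image_mul_rIdeal] at h
  have hlen := hl.eq_of_rIdeal_eq h
  rw [hl.map_mul, hl.map_mul] at hlen
  exact hE.rIdeal_eq_of_dvd hl hv hv' (by omega)

theorem Equidivisible.ncard_rIdealsAbove_mul (hE : Equidivisible S) (hl : IsLengthFunction l)
    (a b : S) :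
    (rIdealsAbove (a * b)).ncard + 1 = (rIdealsAbove a).ncard + (rIdealsAbove b).ncard := by
  have h := Set.ncard_union_add_ncard_inter (rIdealsAbove a) (Set.image (a * ·) '' rIdealsAbove b)
    (hE.rIdealsAbove_finite hl a) ((hE.rIdealsAbove_finite hl b).image _)
  rwa [← hE.rIdealsAbove_mul, rIdealsAbove_inter_image_mul, Set.ncard_singleton,
    (hE.injOn_image_mul hl a b).ncard_image] at h

theorem Equidivisible.nu_mul (hE : Equidivisible S) (hl : IsLengthFunction l) (a b : S) :
    nu (a * b) = nu a + nu b := by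
  have h := hE.ncard_rIdealsAbove_mul hl a b
  have hpos : ∀ c : S, 0 < (rIdealsAbove c).ncard := fun c =>
    (Set.ncard_pos (hE.rIdealsAbove_finite hl c)).mpr ⟨_, univ_mem_rIdealsAbove c⟩
  have := hpos a
  have := hpos b
  simp only [nu_eq_ncard_rIdealsAbove_sub_one]
  omega

theorem nu_of_isUnit {a : S} (ha : IsUnit a) : nu a = 0 := by
  have : rIdealsAbove a = {Set.univ} := by
    refine Set.Subset.antisymm ?_ (Set.singleton_subset_iff.mpr (univ_mem_rIdealsAbove a))
    rintro _ ⟨c, hc, rfl⟩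
    exact Set.univ_subset_iff.mp (rIdeal_of_isUnit ha ▸ rIdeal_subset_rIdeal_iff.mpr hc)
  rw [nu_eq_ncard_rIdealsAbove_sub_one, this, Set.ncard_singleton]

theorem Equidivisible.nu_pos (hE : Equidivisible S) (hl : IsLengthFunction l) {a : S}
    (ha : ¬IsUnit a) : 0 < nu a := by
  have hpair : {rIdeal a, Set.univ} ⊆ rIdealsAbove a :=
    Set.insert_subset (rIdeal_mem_rIdealsAbove a)
      (Set.singleton_subset_iff.mpr (univ_mem_rIdealsAbove a))
  have := Set.ncard_le_ncard hpair (hE.rIdealsAbove_finite hl a)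
  rw [Set.ncard_pair (hl.rIdeal_ne_univ ha)] at this
  rw [nu_eq_ncard_rIdealsAbove_sub_one]
  omega

theorem Equidivisible.isLengthFunction_nu (hE : Equidivisible S) (hl : IsLengthFunction l) :
    IsLengthFunction (nu : S → ℕ) :=
  ⟨hE.nu_mul hl, fun _ => ⟨fun h => by_contra fun ha => (hE.nu_pos hl ha).ne' h, nu_of_isUnit⟩⟩

theorem nu_of_isMonoidAtom (hl : IsLengthFunction l) {a : S} (ha : IsMonoidAtom a) :
    nu a = 1 := by
  have : rIdealsAbove a = {rIdeal a, Set.univ} := by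
    refine Set.Subset.antisymm ?_ (Set.insert_subset (rIdeal_mem_rIdealsAbove a)
      (Set.singleton_subset_iff.mpr (univ_mem_rIdealsAbove a)))
    rintro _ ⟨c, ⟨u, hu⟩, rfl⟩
    rcases ha.2 c u hu with hc | hu'
    · exact Or.inr (rIdeal_of_isUnit hc)
    · exact Or.inl (hu ▸ (rIdeal_mul_of_isUnit hu').symm)
  rw [nu_eq_ncard_rIdealsAbove_sub_one, this, Set.ncard_pair (hl.rIdeal_ne_univ ha.1)]

end

theorem stmt4 {S : Type*} [Monoid S] (hS : IsLeviMonoid S) :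
    IsLengthFunction (nu : S → ℕ) ∧
    (∀ a : S, nu a = 1 ↔ IsMonoidAtom a) ∧
    ∀ l : S → ℕ, IsLengthFunction l → (∀ a : S, IsMonoidAtom a → l a = 1) →
      l = (nu : S → ℕ) := by
  obtain ⟨hE, ⟨l, hl⟩, -⟩ := hS
  have hnu := hE.isLengthFunction_nu hl
  refine ⟨hnu, fun a => ⟨hnu.isMonoidAtom_of_eq_one, nu_of_isMonoidAtom hl⟩, ?_⟩
  intro l' hl' hatom
  exact hl'.ext_of_isMonoidAtom hnu fun a ha => (hatom a ha).trans (nu_of_isMonoidAtom hl ha).symm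
end

section
/- Let G be a group and α : G → G an injective endomorphism with image H. Equip the set G × ℕ with the product (g,p)(h,q) = (gα^p(h), p+q). Then G × ℕ with this product is a cancellative Levi monoid (a Rees monoid) which is right reversible (Sa ∩ Sb ≠ ∅ for all a, b), and the number of maximal proper principal right ideals of this monoid equals the index |G : H| of H in G. Conversely, every right reversible Rees monoid is isomorphic as a monoid to one constructed in this way from some group G and injective endomorphism α of G. -/
/-- A Rees monoid: a cancellative Levi monoid. -/
def IsReesMonoid (S : Type*) [Monoid S] : Prop :=
  (∀ a b c : S, a * b = a * c → b = c) ∧ (∀ a b c : S, b * a = c * a → b = c) ∧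
    IsLeviMonoid S

/-- The principal left ideal `Sa`. -/
def lIdeal {S : Type*} [Monoid S] (a : S) : Set S := Set.range (· * a)

/-- Right reversibility: any two principal left ideals intersect. -/
def RightReversible (S : Type*) [Monoid S] : Prop :=
  ∀ a b : S, (lIdeal a ∩ lIdeal b).Nonempty

/-- `T` is a maximal proper principal right ideal. -/
def IsMaxPrincRightIdeal {S : Type*} [Monoid S] (T : Set S) : Prop :=
  (∃ a : S, T = rIdeal a) ∧ T ≠ Set.univ ∧
    ∀ b : S, T ⊆ rIdeal b → rIdeal b ≠ Set.univ → T = rIdeal b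

/-- The set `G × ℕ`, as a carrier for the Rees product `G ∗_α ℕ`. -/
structure ReesProdR (G : Type*) [Group G] (α : G →* G) where
  g : G
  n : ℕ

/-- The Rees product: multiplication `(g,p)(h,q) = (g·α^p(h), p+q)`. -/
instance ReesProdR.instMonoid {G : Type*} [Group G] (α : G →* G) :
    Monoid (ReesProdR G α) where
  mul p q := ⟨p.g * (⇑α)^[p.n] q.g, p.n + q.n⟩
  one := ⟨1, 0⟩
  one_mul p := by
    show (⟨1 * (⇑α)^[0] p.g, 0 + p.n⟩ : ReesProdR G α) = p
    simp
  mul_one p := by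
    show (⟨p.g * (⇑α)^[p.n] (1 : G), p.n + 0⟩ : ReesProdR G α) = p
    simp [iterate_map_one]
  mul_assoc p q r := by
    show (⟨(p.g * (⇑α)^[p.n] q.g) * (⇑α)^[p.n + q.n] r.g, (p.n + q.n) + r.n⟩ :
        ReesProdR G α) =
      ⟨p.g * (⇑α)^[p.n] (q.g * (⇑α)^[q.n] r.g), p.n + (q.n + r.n)⟩
    simp only [ReesProdR.mk.injEq]
    refine ⟨?_, add_assoc _ _ _⟩
    rw [iterate_map_mul, Function.iterate_add_apply, mul_assoc]

/-!
In `G ∗_α ℕ` the units are the pairs `(g, 0)` and the second coordinate is a length function;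
cancellation, equidivisibility and right reversibility are direct computations. Every proper
principal right ideal lies in one generated by some `(g, 1)`, and these are all maximal, with
`(g, 1)S = (g', 1)S` exactly when `g⁻¹g' ∈ H`; so they are counted by `G ⧸ H`.

Conversely, let `a` be a non-unit of minimal length in a right reversible Rees monoid `S`.
If `xa = ys`, equidivisibility together with the minimality of `a` shows that `a` right-divides
the non-unit `s`; hence every element is `u aⁿ` for a unique unit `u` and `n ∈ ℕ`. In particular
`a g = α(g) a` for an injective endomorphism `α` of the group of units, and `(u, n) ↦ u aⁿ` is an
isomorphism `Sˣ ∗_α ℕ ≃* S`.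
-/

open Function

section PrincipalRightIdeal

variable {S : Type*} [Monoid S]

theorem mem_rIdeal {a x : S} : x ∈ rIdeal a ↔ ∃ y, a * y = x := Iff.rfl

theorem self_mem_rIdeal (a : S) : a ∈ rIdeal a := ⟨1, mul_one a⟩

theorem rIdeal_mul_subset (a b : S) : rIdeal (a * b) ⊆ rIdeal a := by
  rintro _ ⟨y, rfl⟩
  exact ⟨b * y, (mul_assoc a b y).symm⟩

theorem rIdeal_mul_units (a : S) (u : Sˣ) : rIdeal (a * u) = rIdeal a :=
  (rIdeal_mul_subset a u).antisymm (by simpa using rIdeal_mul_subset (a * u) ↑u⁻¹)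

theorem rIdeal_eq_univ_of_isUnit {a : S} (ha : IsUnit a) : rIdeal a = Set.univ := by
  obtain ⟨u, rfl⟩ := ha
  exact Set.eq_univ_of_forall fun x => ⟨↑u⁻¹ * x, by simp⟩

end PrincipalRightIdeal

namespace IsLengthFunction

variable {S : Type*} [Monoid S] {l : S → ℕ}

theorem map_units (hl : IsLengthFunction l) (u : Sˣ) : l u = 0 := (hl.2 u).2 u.isUnit

theorem map_pow (hl : IsLengthFunction l) (a : S) (n : ℕ) : l (a ^ n) = n * l a := by
  induction n with
  | zero => simpa using hl.map_units 1
  | succ n ih => rw [pow_succ, hl.1, ih, Nat.succ_mul]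

theorem pos_of_not_isUnit (hl : IsLengthFunction l) {a : S} (ha : ¬IsUnit a) : 0 < l a :=
  Nat.pos_of_ne_zero fun h => ha ((hl.2 a).1 h)

end IsLengthFunction

namespace ReesProdR

variable {G : Type*} [Group G] {α : G →* G}

@[ext]
theorem ext {p q : ReesProdR G α} (hg : p.g = q.g) (hn : p.n = q.n) : p = q := by
  cases p; cases q; cases hg; cases hn; rfl

@[simp]
theorem mul_g (p q : ReesProdR G α) : (p * q).g = p.g * (⇑α)^[p.n] q.g := rfl

@[simp]
theorem mul_n (p q : ReesProdR G α) : (p * q).n = p.n + q.n := rfl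

@[simp]
theorem one_g : (1 : ReesProdR G α).g = 1 := rfl

@[simp]
theorem one_n : (1 : ReesProdR G α).n = 0 := rfl

theorem isUnit_iff {p : ReesProdR G α} : IsUnit p ↔ p.n = 0 := by
  constructor
  · rintro ⟨u, rfl⟩
    have := congrArg n u.val_inv
    rw [mul_n, one_n] at this
    omega
  · intro h
    refine isUnit_iff_exists.2 ⟨⟨p.g⁻¹, 0⟩, ?_, ?_⟩ <;> ext <;> simp [h]

theorem isLengthFunction_n : IsLengthFunction (n : ReesProdR G α → ℕ) :=
  ⟨mul_n, fun _ => isUnit_iff.symm⟩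

theorem exists_eq_mul_of_mul_eq_mul {a b c d : ReesProdR G α} (h : a * b = c * d)
    (hn : c.n ≤ a.n) : ∃ u, a = c * u ∧ d = u * b := by
  have hg : a.g * (⇑α)^[a.n] b.g = c.g * (⇑α)^[c.n] d.g := congrArg g h
  have hn' : a.n + b.n = c.n + d.n := congrArg n h
  refine ⟨⟨d.g * ((⇑α)^[a.n - c.n] b.g)⁻¹, a.n - c.n⟩, ?_, ?_⟩ <;> ext
  · rw [mul_g, iterate_map_mul, iterate_map_inv, ← iterate_add_apply, Nat.add_sub_cancel' hn,
      ← mul_assoc, ← hg, mul_inv_cancel_right]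
  · simp only [mul_n]
    omega
  · simp
  · simp only [mul_n]
    omega

theorem equidivisible : Equidivisible (ReesProdR G α) := fun _ _ _ _ h =>
  (le_total _ _).imp (exists_eq_mul_of_mul_eq_mul h) (exists_eq_mul_of_mul_eq_mul h.symm)

theorem rightReversible : RightReversible (ReesProdR G α) := fun a b =>
  ⟨⟨(⇑α)^[a.n] b.g, a.n + b.n⟩, ⟨⟨(⇑α)^[a.n] b.g * ((⇑α)^[b.n] a.g)⁻¹, b.n⟩, by ext <;> simp [add_comm]⟩,
    ⟨⟨1, a.n⟩, by ext <;> simp⟩⟩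

instance : IsRightCancelMul (ReesProdR G α) where
  mul_right_cancel a b c h := by
    have hn : b.n = c.n := Nat.add_right_cancel (congrArg n h)
    have hg : b.g * (⇑α)^[b.n] a.g = c.g * (⇑α)^[c.n] a.g := congrArg g h
    rw [hn] at hg
    exact ext (mul_right_cancel hg) hn

theorem mul_left_cancel_of_injective (hα : Injective α) {a b c : ReesProdR G α}
    (h : a * b = a * c) : b = c := by
  have hg : a.g * (⇑α)^[a.n] b.g = a.g * (⇑α)^[a.n] c.g := congrArg g h
  exact ext (hα.iterate a.n (mul_left_cancel hg)) (Nat.add_left_cancel (congrArg n h))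

theorem isReesMonoid (hα : Injective α) : IsReesMonoid (ReesProdR G α) :=
  ⟨fun _ _ _ => mul_left_cancel_of_injective hα, fun _ _ _ => mul_right_cancel, equidivisible,
    ⟨n, isLengthFunction_n⟩, ⟨1, 1⟩, by simp [isUnit_iff]⟩

theorem rIdeal_eq_univ_iff {p : ReesProdR G α} : rIdeal p = Set.univ ↔ p.n = 0 := by
  refine ⟨fun h => ?_, fun h => rIdeal_eq_univ_of_isUnit (isUnit_iff.2 h)⟩
  obtain ⟨q, hq⟩ := mem_rIdeal.1 (h ▸ Set.mem_univ (1 : ReesProdR G α))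
  exact (by simpa using congrArg n hq : p.n = 0 ∧ q.n = 0).1

theorem eq_mk_one_mul {p : ReesProdR G α} (hp : p.n ≠ 0) : p = ⟨p.g, 1⟩ * ⟨1, p.n - 1⟩ := by
  ext
  · simp
  · simp only [mul_n]
    omega

theorem isMaxPrincRightIdeal_rIdeal_mk_one (g : G) :
    IsMaxPrincRightIdeal (rIdeal (⟨g, 1⟩ : ReesProdR G α)) := by
  refine ⟨⟨_, rfl⟩, by simp [rIdeal_eq_univ_iff], fun b hsub hb => ?_⟩
  obtain ⟨c, hc⟩ := mem_rIdeal.1 (hsub (self_mem_rIdeal _))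
  have hc0 : c.n = 0 := by
    have := congrArg n hc
    rw [Ne, rIdeal_eq_univ_iff] at hb
    simp only [mul_n] at this
    omega
  obtain ⟨u, rfl⟩ := isUnit_iff.2 hc0
  rw [← hc, rIdeal_mul_units]

theorem isMaxPrincRightIdeal_iff {T : Set (ReesProdR G α)} :
    IsMaxPrincRightIdeal T ↔ ∃ g : G, T = rIdeal ⟨g, 1⟩ := by
  refine ⟨?_, fun ⟨g, hg⟩ => hg ▸ isMaxPrincRightIdeal_rIdeal_mk_one g⟩
  rintro ⟨⟨a, rfl⟩, hne, hmax⟩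
  have hsub := rIdeal_mul_subset (⟨a.g, 1⟩ : ReesProdR G α) ⟨1, a.n - 1⟩
  rw [← eq_mk_one_mul (mt rIdeal_eq_univ_iff.2 hne)] at hsub
  exact ⟨a.g, hmax _ hsub (isMaxPrincRightIdeal_rIdeal_mk_one a.g).2.1⟩

theorem rIdeal_mk_one_eq_iff {g g' : G} :
    rIdeal (⟨g, 1⟩ : ReesProdR G α) = rIdeal ⟨g', 1⟩ ↔ g⁻¹ * g' ∈ α.range := by
  constructor
  · intro h
    obtain ⟨y, hy⟩ := mem_rIdeal.1 (h ▸ self_mem_rIdeal (⟨g', 1⟩ : ReesProdR G α))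
    have hg : g * α y.g = g' := by simpa using congrArg ReesProdR.g hy
    exact ⟨y.g, by rw [← hg, inv_mul_cancel_left]⟩
  · rintro ⟨x, hx⟩
    have hg' : (⟨g', 1⟩ : ReesProdR G α) = ⟨g, 1⟩ * ⟨x, 0⟩ := by ext <;> simp [hx]
    obtain ⟨u, hu⟩ := isUnit_iff.2 (rfl : (⟨x, 0⟩ : ReesProdR G α).n = 0)
    rw [hg', ← hu, rIdeal_mul_units]

theorem ncard_isMaxPrincRightIdeal :
    {T : Set (ReesProdR G α) | IsMaxPrincRightIdeal T}.ncard = α.range.index := by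
  let f : G ⧸ α.range → Set (ReesProdR G α) := Quotient.lift (fun g => rIdeal ⟨g, 1⟩)
    fun _ _ h => rIdeal_mk_one_eq_iff.2 (QuotientGroup.leftRel_apply.1 h)
  have hf : Injective f := by
    rintro ⟨g⟩ ⟨g'⟩ h
    exact Quotient.sound (QuotientGroup.leftRel_apply.2 (rIdeal_mk_one_eq_iff.1 h))
  have hrange : Set.range f = {T | IsMaxPrincRightIdeal T} := by
    ext T
    refine ⟨?_, fun hT => ?_⟩
    · rintro ⟨⟨g⟩, rfl⟩
      exact isMaxPrincRightIdeal_rIdeal_mk_one g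
    · obtain ⟨g, rfl⟩ := isMaxPrincRightIdeal_iff.1 hT
      exact ⟨⟦g⟧, rfl⟩
  rw [← hrange, Set.ncard_range_of_injective hf]
  rfl

variable {M : Type*} [Monoid M]

theorem pow_mul_eq_iterate_mul_pow (φ : G →* M) {a : M} (h : ∀ g, a * φ g = φ (α g) * a)
    (n : ℕ) (g : G) : a ^ n * φ g = φ ((⇑α)^[n] g) * a ^ n := by
  induction n generalizing g with
  | zero => simp
  | succ n ih =>
    rw [pow_succ, mul_assoc, h, ← mul_assoc, ih, iterate_succ_apply, mul_assoc]

def lift (φ : G →* M) (a : M) (h : ∀ g, a * φ g = φ (α g) * a) : ReesProdR G α →* M where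
  toFun p := φ p.g * a ^ p.n
  map_one' := by simp
  map_mul' p q := by
    simp only [mul_g, mul_n, map_mul, pow_add, mul_assoc]
    rw [← mul_assoc (a ^ p.n), pow_mul_eq_iterate_mul_pow φ h, mul_assoc]

end ReesProdR

section RightReversibleReesMonoid

variable {S : Type*} [Monoid S] {l : S → ℕ}

theorem exists_eq_mul_of_forall_le (hl : IsLengthFunction l) (hS : Equidivisible S)
    (hrr : RightReversible S) {a : S} (hmin : ∀ s, ¬IsUnit s → l a ≤ l s) {s : S}
    (hs : ¬IsUnit s) : ∃ t, s = t * a := by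
  obtain ⟨_, ⟨x, rfl⟩, ⟨y, hxy⟩⟩ := hrr a s
  rcases hS x a y s hxy.symm with ⟨u, -, hu⟩ | ⟨v, -, hv⟩
  · exact ⟨u, hu⟩
  · have hla : l a = l v + l s := by rw [hv, hl.1]
    obtain ⟨w, rfl⟩ := (hl.2 v).1 (by have := hmin s hs; omega)
    exact ⟨↑w⁻¹, by rw [hv, Units.inv_mul_cancel_left]⟩

theorem exists_eq_units_mul_pow (hl : IsLengthFunction l) {a : S} (ha : ¬IsUnit a)
    (hdvd : ∀ s, ¬IsUnit s → ∃ t, s = t * a) (s : S) : ∃ (u : Sˣ) (n : ℕ), s = u * a ^ n := by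
  induction hs : l s using Nat.strong_induction_on generalizing s with
  | _ N ih =>
  by_cases hu : IsUnit s
  · obtain ⟨u, rfl⟩ := hu
    exact ⟨u, 0, by simp⟩
  · obtain ⟨t, rfl⟩ := hdvd s hu
    have hlt : l t < N := by
      have := hl.pos_of_not_isUnit ha
      rw [← hs, hl.1]
      omega
    obtain ⟨u, n, rfl⟩ := ih _ hlt t rfl
    exact ⟨u, n + 1, by rw [pow_succ, mul_assoc]⟩

theorem units_mul_pow_injective [IsRightCancelMul S] (hl : IsLengthFunction l) {a : S}
    (ha : ¬IsUnit a) {u v : Sˣ} {m n : ℕ} (h : (u : S) * a ^ m = v * a ^ n) : u = v ∧ m = n := by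
  have hmn : m = n := by
    have := congrArg l h
    rw [hl.1, hl.1, hl.map_units, hl.map_units, hl.map_pow, hl.map_pow, zero_add, zero_add] at this
    exact Nat.eq_of_mul_eq_mul_right (hl.pos_of_not_isUnit ha) this
  subst hmn
  exact ⟨Units.ext (mul_right_cancel h), rfl⟩

theorem exists_mul_eq_units_mul (hl : IsLengthFunction l) {a : S} (ha : ¬IsUnit a)
    (hdecomp : ∀ s : S, ∃ (u : Sˣ) (n : ℕ), s = u * a ^ n) (g : Sˣ) :
    ∃ u : Sˣ, a * g = u * a := by
  obtain ⟨u, n, hun⟩ := hdecomp (a * g)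
  have hn : n = 1 := by
    have := congrArg l hun
    rw [hl.1, hl.1, hl.map_units, hl.map_units, hl.map_pow, zero_add, add_zero] at this
    exact Nat.eq_of_mul_eq_mul_right (hl.pos_of_not_isUnit ha) (by rw [one_mul]; exact this.symm)
  exact ⟨u, by rw [hun, hn, pow_one]⟩

theorem exists_monoidHom_units_mul_eq [IsRightCancelMul S] {a : S}
    (h : ∀ g : Sˣ, ∃ u : Sˣ, a * g = u * a) : ∃ α : Sˣ →* Sˣ, ∀ g, a * g = α g * a := by
  choose f hf using h
  refine ⟨{ toFun := f, map_one' := ?_, map_mul' := fun g k => ?_ }, hf⟩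
  · exact Units.ext (mul_right_cancel (b := a) (by rw [← hf 1]; simp))
  · refine Units.ext (mul_right_cancel (b := a) ?_)
    rw [← hf, Units.val_mul, Units.val_mul, ← mul_assoc, hf g, mul_assoc, hf k, ← mul_assoc]

theorem exists_mulEquiv_reesProdR (hS : IsReesMonoid S) (hrr : RightReversible S) :
    ∃ α : Sˣ →* Sˣ, Injective α ∧ Nonempty (S ≃* ReesProdR Sˣ α) := by
  obtain ⟨hlc, hrc, hequi, ⟨l, hl⟩, s₀, hs₀⟩ := hS
  have : IsRightCancelMul S := ⟨fun a b c h => hrc a b c h⟩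
  obtain ⟨a, ha, hmin⟩ := (InvImage.wf l wellFounded_lt).has_min {s | ¬IsUnit s} ⟨s₀, hs₀⟩
  have hdecomp := exists_eq_units_mul_pow hl ha
    fun s hs => exists_eq_mul_of_forall_le hl hequi hrr (fun s hs => not_lt.1 (hmin s hs)) hs
  obtain ⟨α, hα⟩ := exists_monoidHom_units_mul_eq (exists_mul_eq_units_mul hl ha hdecomp)
  have hinj : Injective α := fun g k h => Units.ext (hlc a g k (by rw [hα, hα, h]))
  refine ⟨α, hinj, ⟨(MulEquiv.ofBijective (ReesProdR.lift (Units.coeHom S) a hα) ⟨?_, ?_⟩).symm⟩⟩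
  · rintro ⟨g, m⟩ ⟨k, n⟩ h
    obtain ⟨rfl, rfl⟩ := units_mul_pow_injective hl ha h
    rfl
  · intro s
    obtain ⟨u, n, rfl⟩ := hdecomp s
    exact ⟨⟨u, n⟩, rfl⟩

end RightReversibleReesMonoid

/-- Rees's theorem, recurrent case: for an injective endomorphism `α` of `G`
with image `H`, the monoid `G ∗_α ℕ` is a right reversible Rees monoid having
`|G : H|` maximal proper principal right ideals, and every right reversible
Rees monoid arises this way. -/
theorem stmt16 :
    (∀ (G : Type u) [Group G] (α : G →* G) (H : Subgroup G),
      Function.Injective α → α.range = H →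
      IsReesMonoid (ReesProdR G α) ∧ RightReversible (ReesProdR G α) ∧
        {T : Set (ReesProdR G α) | IsMaxPrincRightIdeal T}.ncard = H.index) ∧
    (∀ (S : Type u) [Monoid S], IsReesMonoid S → RightReversible S →
      ∃ (G : Type u) (_ : Group G) (α : G →* G),
        Function.Injective α ∧ Nonempty (S ≃* ReesProdR G α)) := by
  refine ⟨fun G _ α H hα hH => ?_, fun S _ hS hrr => ?_⟩
  · subst hH
    exact ⟨ReesProdR.isReesMonoid hα, ReesProdR.rightReversible,
      ReesProdR.ncard_isMaxPrincRightIdeal⟩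
  · obtain ⟨α, hα, e⟩ := exists_mulEquiv_reesProdR hS hrr
    exact ⟨Sˣ, inferInstance, α, hα, e⟩
end
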